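/- Let α_{k+1}, …, α_j be exchangeable real-valued random variables (nonconformity scores) and U_j be uniform on (0,1) independent of them. Define the randomized p-value p_j = (#{i : α_i > α_j} + U_j·#{i : α_i = α_j})/(j−k). Then p_j is uniformly distributed on (0,1). -/

import Mathlib

open MeasureTheory ProbabilityTheory Finset

/-!
Fix the scores `a`. The tie classes of `a`, taken in decreasing order of their value, cut
`[0, n)` into consecutive intervals `[G, G + k)`, where `G` counts the strictly larger scores
and `k` is the size of the class; for `j` in the class, `n * p_j = G + U k` is uniform on that
interval. Averaging over the index `j` therefore gives the uniform law on `(0, 1)` exactly (a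
telescoping sum over the distinct scores). By exchangeability the law of `p_j` does not depend
on `j`, and independence of `U` lets us condition on the scores, so `p_m` itself is uniform.
-/

theorem sum_comp_sum_filter_le_sub_comp_sum_filter_lt {β N M : Type*} [LinearOrder β]
    [AddCommMonoid N] [AddCommGroup M] (g : N → M) (w : β → N) (s : Finset β) :
    ∑ v ∈ s, (g (∑ u ∈ s with v ≤ u, w u) - g (∑ u ∈ s with v < u, w u)) =
      g (∑ u ∈ s, w u) - g 0 := by
  induction s using Finset.induction_on_min with
  | empty => simp
  | insert a s ha ih =>
    have ha' : a ∉ s := fun h => lt_irrefl a (ha a h)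
    have hle : ∀ v ∈ s, {u ∈ insert a s | v ≤ u} = {u ∈ s | v ≤ u} := fun v hv => by
      rw [filter_insert, if_neg (ha v hv).not_ge]
    have hlt : ∀ v ∈ s, {u ∈ insert a s | v < u} = {u ∈ s | v < u} := fun v hv => by
      rw [filter_insert, if_neg (ha v hv).not_gt]
    have htop : {u ∈ insert a s | a < u} = s := by
      rw [filter_insert, if_neg (lt_irrefl a), filter_true_of_mem ha]
    have hbot : {u ∈ insert a s | a ≤ u} = insert a s := filter_true_of_mem fun u hu => by
      rcases mem_insert.mp hu with rfl | hu
      exacts [le_rfl, (ha u hu).le]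
    have hrest : ∑ v ∈ s, (g (∑ u ∈ insert a s with v ≤ u, w u) -
        g (∑ u ∈ insert a s with v < u, w u)) = g (∑ u ∈ s, w u) - g 0 := by
      rw [← ih]
      exact sum_congr rfl fun v hv => by rw [hle v hv, hlt v hv]
    rw [sum_insert ha', hrest, hbot, htop, sum_insert ha']
    abel

section Ranks

variable {ι β : Type*} [Fintype ι] [LinearOrder β]

def numAbove (a : ι → β) (j : ι) : ℕ := #{i | a j < a i}

def numTies (a : ι → β) (j : ι) : ℕ := #{i | a i = a j}

theorem numTies_pos (a : ι → β) (j : ι) : 0 < numTies a j :=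
  card_pos.mpr ⟨j, by simp⟩

theorem card_filter_comp_eq_sum_card_fiber (a : ι → β) (q : β → Prop) [DecidablePred q] :
    #{i | q (a i)} = ∑ v ∈ univ.image a with q v, #{i | a i = v} := by
  rw [card_filter, sum_comp (fun v => if q v then 1 else 0) a, sum_filter]
  simp

theorem card_filter_comp_perm (σ : Equiv.Perm ι) (q : ι → Prop) [DecidablePred q] :
    #{i | q (σ i)} = #{i | q i} :=
  card_equiv σ (by simp)

theorem numAbove_comp_perm (a : ι → β) (σ : Equiv.Perm ι) (j : ι) :
    numAbove (a ∘ σ) j = numAbove a (σ j) :=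
  card_filter_comp_perm σ fun i => a (σ j) < a i

theorem numTies_comp_perm (a : ι → β) (σ : Equiv.Perm ι) (j : ι) :
    numTies (a ∘ σ) j = numTies a (σ j) :=
  card_filter_comp_perm σ fun i => a i = a (σ j)

theorem mul_clamp_div_sub (x G : ℝ) {T : ℝ} (hT : 0 < T) :
    T * max (min ((x - G) / T) 1) 0 = min x (G + T) - min x G := by
  rcases le_total x G with hxG | hGx
  · rw [max_eq_right (min_le_of_left_le (div_nonpos_of_nonpos_of_nonneg (by linarith) hT.le)),
      min_eq_left (by linarith), min_eq_left hxG]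
    ring
  · rw [min_eq_right hGx, max_eq_left (le_min (div_nonneg (by linarith) hT.le) zero_le_one)]
    rcases le_total x (G + T) with hx | hx
    · rw [min_eq_left ((div_le_one hT).mpr (by linarith)), min_eq_left hx]
      field_simp
    · rw [min_eq_right ((one_le_div hT).mpr (by linarith)), min_eq_right hx]
      ring

theorem sum_clamp_div_numTies (a : ι → β) (x : ℝ) :
    ∑ j, max (min ((x - numAbove a j) / numTies a j) 1) 0 =
      min x (Fintype.card ι) - min x 0 := by
  set c : β → ℝ := fun v => (#{i | a i = v} : ℝ)
  set V := univ.image a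
  have hsplit : ∀ v, #{i | v ≤ a i} = #{i | v < a i} + #{i | a i = v} := fun v => by
    classical
    rw [← card_union_of_disjoint (disjoint_filter.mpr fun i _ h h' => h.ne' h'), ← filter_or]
    simp only [le_iff_lt_or_eq, eq_comm]
  have hfiber : ∀ q : β → Prop, ∀ [DecidablePred q],
      (#{i | q (a i)} : ℝ) = ∑ u ∈ V with q u, c u :=
    fun q _ => by rw [card_filter_comp_eq_sum_card_fiber a q]; push_cast; rfl
  calc ∑ j, max (min ((x - numAbove a j) / numTies a j) 1) 0
      = ∑ v ∈ V, c v * max (min ((x - #{i | v < a i}) / c v) 1) 0 := by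
        refine (sum_comp (fun v => max (min ((x - #{i | v < a i}) / c v) 1) 0) a).trans ?_
        simp only [nsmul_eq_mul, c, V]
    _ = ∑ v ∈ V,
          (min x (∑ u ∈ V with v ≤ u, c u) - min x (∑ u ∈ V with v < u, c u)) := by
        refine sum_congr rfl fun v hv => ?_
        obtain ⟨j, -, rfl⟩ := mem_image.mp hv
        have hc : 0 < c (a j) := Nat.cast_pos.mpr (numTies_pos a j)
        rw [mul_clamp_div_sub x _ hc, ← hfiber, ← hfiber, hsplit, Nat.cast_add]
    _ = min x (Fintype.card ι) - min x 0 := by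
        rw [sum_comp_sum_filter_le_sub_comp_sum_filter_lt, ← card_univ,
          card_eq_sum_card_image a univ]
        push_cast
        rfl

noncomputable def smoothedPValue (a : ι → β) (j : ι) (u : ℝ) : ℝ :=
  (numAbove a j + u * numTies a j) / Fintype.card ι

theorem smoothedPValue_comp_perm (a : ι → β) (σ : Equiv.Perm ι) (j : ι) (u : ℝ) :
    smoothedPValue (a ∘ σ) j u = smoothedPValue a (σ j) u := by
  rw [smoothedPValue, smoothedPValue, numAbove_comp_perm, numTies_comp_perm]

theorem setOf_smoothedPValue_le (a : ι → β) (j : ι) (t : ℝ) :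
    {u | smoothedPValue a j u ≤ t} =
      Set.Iic ((t * Fintype.card ι - numAbove a j) / numTies a j) := by
  have hn : (0 : ℝ) < Fintype.card ι := Nat.cast_pos.mpr (Fintype.card_pos_iff.mpr ⟨j⟩)
  have hk : (0 : ℝ) < numTies a j := Nat.cast_pos.mpr (numTies_pos a j)
  ext u
  rw [Set.mem_ofPred_eq, Set.mem_Iic, smoothedPValue, div_le_iff₀ hn, le_div_iff₀ hk]
  constructor <;> intro h <;> linarith

theorem volume_restrict_Ioo_zero_one_Iic (y : ℝ) :
    volume.restrict (Set.Ioo 0 1) (Set.Iic y) = ENNReal.ofReal (min y 1) := by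
  rw [Measure.restrict_congr_set Ioo_ae_eq_Ioc, Measure.restrict_apply measurableSet_Iic,
    Set.inter_comm, Set.Ioc_inter_Iic, Real.volume_Ioc, sub_zero, min_comm]

theorem sum_volume_restrict_smoothedPValue_le (a : ι → β) (t : ℝ) :
    ∑ j, volume.restrict (Set.Ioo 0 1) {u | smoothedPValue a j u ≤ t} =
      Fintype.card ι * volume.restrict (Set.Ioo 0 1) (Set.Iic t) := by
  set n : ℝ := (Fintype.card ι : ℝ)
  have hn : 0 ≤ n := Nat.cast_nonneg _
  calc ∑ j, volume.restrict (Set.Ioo 0 1) {u | smoothedPValue a j u ≤ t}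
      = ∑ j, ENNReal.ofReal (max (min ((t * n - numAbove a j) / numTies a j) 1) 0) := by
        simp only [setOf_smoothedPValue_le, volume_restrict_Ioo_zero_one_Iic, ENNReal.ofReal_max,
          ENNReal.ofReal_zero, max_eq_left, zero_le, n]
    _ = ENNReal.ofReal (min (t * n) n - min (t * n) 0) := by
        rw [← ENNReal.ofReal_sum_of_nonneg fun j _ => le_max_right _ _, sum_clamp_div_numTies]
    _ = Fintype.card ι * volume.restrict (Set.Ioo 0 1) (Set.Iic t) := by
        rw [volume_restrict_Ioo_zero_one_Iic]
        rcases le_total 0 t with ht | ht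
        · have hmin : min (t * n) n = min t 1 * n := by rw [min_mul_of_nonneg _ _ hn, one_mul]
          rw [min_eq_right (mul_nonneg ht hn), sub_zero, hmin, ENNReal.ofReal_mul' hn,
            ENNReal.ofReal_natCast, mul_comm]
        · have htn : t * n ≤ 0 := mul_nonpos_of_nonpos_of_nonneg ht hn
          rw [min_eq_left (htn.trans hn), min_eq_left htn, sub_self, ENNReal.ofReal_zero,
            ENNReal.ofReal_eq_zero.mpr ((min_le_left t 1).trans ht), mul_zero]

end Ranks

theorem measurable_card_filter {X ι : Type*} [MeasurableSpace X] [Fintype ι]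
    {P : ι → X → Prop} [∀ i x, Decidable (P i x)] (hP : ∀ i, MeasurableSet {x | P i x}) :
    Measurable fun x => #{i | P i x} := by
  simp_rw [card_filter]
  exact Finset.measurable_sum _ fun i _ => Measurable.ite (hP i) measurable_const measurable_const

theorem measurable_smoothedPValue {ι : Type*} [Fintype ι] (j : ι) :
    Measurable fun x : ℝ × (ι → ℝ) => smoothedPValue x.2 j x.1 := by
  have hAbove : Measurable fun a : ι → ℝ => numAbove a j :=
    measurable_card_filter fun i =>
      measurableSet_lt (measurable_pi_apply j) (measurable_pi_apply i)
  have hTies : Measurable fun a : ι → ℝ => numTies a j :=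
    measurable_card_filter fun i =>
      measurableSet_eq_fun (measurable_pi_apply i) (measurable_pi_apply j)
  unfold smoothedPValue
  fun_prop

theorem lintegral_comp_perm_of_map_eq {ι β : Type*} [MeasurableSpace β]
    {ν : Measure (ι → β)} {σ : Equiv.Perm ι} (hσ : ν.map (fun a => a ∘ σ) = ν)
    (f : (ι → β) → ENNReal) :
    ∫⁻ a, f (a ∘ σ) ∂ν = ∫⁻ a, f a ∂ν := by
  conv_rhs => rw [← hσ]
  exact (lintegral_map_equiv f
    (MeasurableEquiv.arrowCongr' σ.symm (MeasurableEquiv.refl β))).symm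

theorem lintegral_volume_restrict_smoothedPValue_le {ι : Type*} [Fintype ι]
    {ν : Measure (ι → ℝ)} [IsProbabilityMeasure ν]
    (hν : ∀ σ : Equiv.Perm ι, ν.map (fun a => a ∘ σ) = ν) (j : ι) (t : ℝ) :
    ∫⁻ a, volume.restrict (Set.Ioo 0 1) {u | smoothedPValue a j u ≤ t} ∂ν =
      volume.restrict (Set.Ioo 0 1) (Set.Iic t) := by
  set F : ι → (ι → ℝ) → ENNReal := fun k a =>
    volume.restrict (Set.Ioo 0 1) {u | smoothedPValue a k u ≤ t}
  have hF : ∀ k, Measurable (F k) := fun k =>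
    measurable_measure_prodMk_right
      (measurableSet_le (measurable_smoothedPValue k) measurable_const)
  have hF_eq : ∀ k, ∫⁻ a, F k a ∂ν = ∫⁻ a, F j a ∂ν := fun k => by
    classical
    rw [← lintegral_comp_perm_of_map_eq (hν (Equiv.swap j k)) (F k)]
    simp only [F, smoothedPValue_comp_perm, Equiv.swap_apply_right]
  have : Nonempty ι := ⟨j⟩
  have hcard : (Fintype.card ι : ENNReal) ≠ 0 := Nat.cast_ne_zero.mpr Fintype.card_ne_zero
  refine (ENNReal.mul_right_inj hcard (ENNReal.natCast_ne_top _)).mp ?_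
  calc Fintype.card ι * ∫⁻ a, F j a ∂ν
      = ∑ k, ∫⁻ a, F k a ∂ν := by simp [hF_eq]
    _ = ∫⁻ a, ∑ k, F k a ∂ν := (lintegral_finsetSum _ fun k _ => hF k).symm
    _ = Fintype.card ι * volume.restrict (Set.Ioo 0 1) (Set.Iic t) := by
      simp only [F, sum_volume_restrict_smoothedPValue_le, lintegral_const, measure_univ, mul_one]

theorem ProbabilityTheory.IndepFun.measure_preimage_prodMk {Ω β γ : Type*}
    [MeasurableSpace Ω] [MeasurableSpace β] [MeasurableSpace γ]
    {μ : Measure Ω} [IsFiniteMeasure μ] {X : Ω → β} {Y : Ω → γ}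
    (hXY : IndepFun X Y μ) (hX : AEMeasurable X μ) (hY : AEMeasurable Y μ)
    {s : Set (β × γ)} (hs : MeasurableSet s) :
    μ ((fun ω => (X ω, Y ω)) ⁻¹' s) =
      ∫⁻ y, μ.map X ((fun x => (x, y)) ⁻¹' s) ∂μ.map Y := by
  rw [← Measure.map_apply_of_aemeasurable (hX.prodMk hY) hs,
    (indepFun_iff_map_prod_eq_prod_map_map hX hY).mp hXY, Measure.prod_apply_symm hs]

/-- Validity of randomized conformal p-values: if the nonconformity scores
`α 0, …, α m` are exchangeable and `U` is uniform on `(0,1)` and independent of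
them, then the smoothed p-value
`p = (#{i : α i > α m} + U · #{i : α i = α m}) / (m + 1)`
is uniformly distributed on `(0,1)`. -/
theorem conformal_pvalue_uniform
    {Ω : Type*} [MeasurableSpace Ω] (μ : Measure Ω) [IsProbabilityMeasure μ]
    (m : ℕ) (α : Fin (m + 1) → Ω → ℝ) (hαmeas : ∀ i, Measurable (α i))
    (hexch : ∀ σ : Equiv.Perm (Fin (m + 1)),
      Measure.map (fun ω i => α (σ i) ω) μ = Measure.map (fun ω i => α i ω) μ)
    (U : Ω → ℝ) (hUmeas : Measurable U)
    (hU : Measure.map U μ = volume.restrict (Set.Ioo (0 : ℝ) 1))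
    (hindep : IndepFun U (fun ω i => α i ω) μ)
    (p : Ω → ℝ)
    (hp : ∀ ω, p ω =
      (((Finset.univ.filter fun i => α (Fin.last m) ω < α i ω).card : ℝ) +
        U ω * ((Finset.univ.filter fun i => α i ω = α (Fin.last m) ω).card : ℝ)) /
        (m + 1)) :
    Measure.map p μ = volume.restrict (Set.Ioo (0 : ℝ) 1) := by
  set A : Ω → Fin (m + 1) → ℝ := fun ω i => α i ω
  have hA : Measurable A := measurable_pi_lambda A hαmeas
  have hpA : p = fun ω => smoothedPValue (A ω) (Fin.last m) (U ω) := funext fun ω => by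
    rw [hp ω, smoothedPValue, Fintype.card_fin, numAbove, numTies]
    push_cast
    congr!
  have hexchA : ∀ σ : Equiv.Perm (Fin (m + 1)), (μ.map A).map (fun a => a ∘ σ) = μ.map A :=
    fun σ => by rw [Measure.map_map (by fun_prop) hA]; exact hexch σ
  have hS : ∀ t : ℝ, MeasurableSet {x : ℝ × (Fin (m + 1) → ℝ) |
      smoothedPValue x.2 (Fin.last m) x.1 ≤ t} := fun t =>
    measurableSet_le (measurable_smoothedPValue _) measurable_const
  subst hpA
  have hpm : Measurable fun ω => smoothedPValue (A ω) (Fin.last m) (U ω) :=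
    (measurable_smoothedPValue _).comp (f := fun ω => (U ω, A ω)) (hUmeas.prodMk hA)
  have : IsProbabilityMeasure (μ.map A) := Measure.isProbabilityMeasure_map hA.aemeasurable
  refine Measure.ext_of_Iic _ _ fun t => ?_
  rw [Measure.map_apply hpm measurableSet_Iic,
    ← lintegral_volume_restrict_smoothedPValue_le hexchA (Fin.last m) t, ← hU]
  exact hindep.measure_preimage_prodMk hUmeas.aemeasurable hA.aemeasurable (hS t)
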